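/- Let H be a real inner product space of finite dimension n ≥ 1, let N ≥ 2, let K be a bounded linear operator on H, and let G = (g_1,…,g_N) be a 2-uniform K-dual of F = (f_1,…,f_N), i.e., ⟨f_i, g_i⟩ = tr(K)/N for all i and ⟨f_i, g_j⟩⟨f_j, g_i⟩ is a constant c for all i ≠ j. Then: (a) every K-dual G' = (g'_1,…,g'_N) of F satisfies max_{1≤i≤N} |⟨f_i, g'_i⟩| ≥ |tr(K)|/N = max_{1≤i≤N} |⟨f_i, g_i⟩|; and (b) every K-dual G' of F with ⟨f_i, g'_i⟩ = tr(K)/N for all i satisfies max_{i≠j} e_{ij}(F,G) ≤ max_{i≠j} e_{ij}(F,G'). -/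

import Mathlib

/-!
For any `K`-dual `G` of `F` the operator `K` is `∑ ⟪G i, ·⟫ • F i`, so `tr K = ∑ ⟪G i, F i⟫`
and `tr (K²) = ∑_{i,j} ⟪G i, F j⟫ * ⟪G j, F i⟫`; both sums are thus the same for every dual.
The first gives (a) by the triangle inequality. For (b), once the diagonal is pinned at
`tr K / N`, the second says that the off-diagonal products `c'_{ij}` of `G'` average to the
constant `c` of `G`, so some `c'_{ij}` lies on the far side of `c` from `0`, where `eErr` is larger.
-/

local notation "⟪" x ", " y "⟫" => @inner ℝ _ _ x y

noncomputable def eErr (t c : ℝ) : ℝ :=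
  if 0 ≤ c then |t| + Real.sqrt c else Real.sqrt (t ^ 2 - c)

open Finset

theorem LinearMap.trace_eq_sum_of_forall_eq_sum_smul {R M ι : Type*} [CommRing R]
    [AddCommGroup M] [Module R M] [Module.Free R M] [Module.Finite R M] [Fintype ι]
    (K : M →ₗ[R] M) (φ : ι → Module.Dual R M) (x : ι → M)
    (hK : ∀ f, K f = ∑ i, φ i f • x i) :
    LinearMap.trace R M K = ∑ i, φ i (x i) := by
  have : K = ∑ i, (φ i).smulRight (x i) := by ext f; simp [hK]
  simp [this, map_sum]

lemma eErr_le_eErr (t : ℝ) {c c' : ℝ} (h : 0 ≤ c ∧ c ≤ c' ∨ c' ≤ c ∧ c < 0) :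
    eErr t c ≤ eErr t c' := by
  rcases h with ⟨hc, h⟩ | ⟨h, hc⟩
  · rw [eErr, eErr, if_pos hc, if_pos (hc.trans h)]
    exact add_le_add le_rfl (Real.sqrt_le_sqrt h)
  · rw [eErr, eErr, if_neg (not_le.mpr hc), if_neg (not_le.mpr (h.trans_lt hc))]
    exact Real.sqrt_le_sqrt (by linarith)

lemma exists_eErr_le_of_sum_eq {α : Type*} {s : Finset α} (hs : s.Nonempty) (t c : ℝ)
    (a : α → ℝ) (ha : ∑ p ∈ s, a p = #s * c) : ∃ p ∈ s, eErr t c ≤ eErr t (a p) := by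
  have ha' : ∑ _p ∈ s, c = ∑ p ∈ s, a p := by rw [sum_const, nsmul_eq_mul, ha]
  rcases le_or_gt 0 c with hc | hc
  · obtain ⟨p, hp, hle⟩ := exists_le_of_sum_le hs ha'.le
    exact ⟨p, hp, eErr_le_eErr t (.inl ⟨hc, hle⟩)⟩
  · obtain ⟨p, hp, hle⟩ := exists_le_of_sum_le hs ha'.ge
    exact ⟨p, hp, eErr_le_eErr t (.inr ⟨hle, hc⟩)⟩

lemma abs_sum_div_card_le_iSup_abs {N : ℕ} (a : Fin N → ℝ) :
    |∑ i, a i| / N ≤ ⨆ i, |a i| := by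
  rcases N.eq_zero_or_pos with rfl | hN
  · simp
  have : Nonempty (Fin N) := ⟨⟨0, hN⟩⟩
  rw [div_le_iff₀ (by exact_mod_cast hN)]
  calc |∑ i, a i| ≤ ∑ i, |a i| := abs_sum_le_sum_abs _ _
    _ ≤ ∑ _i : Fin N, ⨆ i, |a i| := sum_le_sum fun i _ =>
        le_ciSup (f := fun i => |a i|) (Finite.bddAbove_range _) i
    _ = (⨆ i, |a i|) * N := by simp [mul_comm]

section KDual

variable {H : Type*} [NormedAddCommGroup H] [InnerProductSpace ℝ H] {N : ℕ}

def IsKDual (K : H →ₗ[ℝ] H) (F G : Fin N → H) : Prop :=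
  ∀ f, K f = ∑ i, ⟪G i, f⟫ • F i

variable [FiniteDimensional ℝ H] {K : H →ₗ[ℝ] H} {F G : Fin N → H}

theorem IsKDual.trace_eq (hK : IsKDual K F G) :
    LinearMap.trace ℝ H K = ∑ i, ⟪G i, F i⟫ :=
  K.trace_eq_sum_of_forall_eq_sum_smul (fun i => innerₛₗ ℝ (G i)) F hK

theorem IsKDual.trace_comp_self_eq (hK : IsKDual K F G) :
    LinearMap.trace ℝ H (K ∘ₗ K) = ∑ i, ∑ j, ⟪G i, F j⟫ * ⟪G j, F i⟫ := by
  rw [(K ∘ₗ K).trace_eq_sum_of_forall_eq_sum_smul (fun i => innerₛₗ ℝ (G i) ∘ₗ K) F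
    fun f => hK (K f)]
  refine sum_congr rfl fun i _ => ?_
  simp only [LinearMap.comp_apply, innerₛₗ_apply_apply, hK (F i), inner_sum, real_inner_smul_right,
    mul_comm]

theorem IsKDual.sum_offDiag_eq (hK : IsKDual K F G) {t : ℝ} (ht : ∀ i, ⟪G i, F i⟫ = t) :
    ∑ p ∈ univ.offDiag, ⟪G p.1, F p.2⟫ * ⟪G p.2, F p.1⟫ =
      LinearMap.trace ℝ H (K ∘ₗ K) - N * t ^ 2 := by
  rw [hK.trace_comp_self_eq, ← Fintype.sum_prod_type', ← univ_product_univ,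
    ← diag_union_offDiag, sum_union (disjoint_diag_offDiag _), sum_diag]
  simp [ht, sq]

end KDual

theorem stmt19_general
    {H : Type*} [NormedAddCommGroup H] [InnerProductSpace ℝ H] [FiniteDimensional ℝ H]
    {N : ℕ} (hN : 2 ≤ N)
    (K : H →L[ℝ] H)
    (F G : Fin N → H)
    (hdual : ∀ f : H, K f = ∑ i, ⟪G i, f⟫ • F i)
    (huni1 : ∀ i, ⟪G i, F i⟫ = LinearMap.trace ℝ H (K : H →ₗ[ℝ] H) / N)
    (c : ℝ)
    (huni2 : ∀ i j, i ≠ j → ⟪G i, F j⟫ * ⟪G j, F i⟫ = c) :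
    ((⨆ i, |⟪G i, F i⟫|) = |LinearMap.trace ℝ H (K : H →ₗ[ℝ] H)| / N) ∧
    (∀ G' : Fin N → H, (∀ f : H, K f = ∑ i, ⟪G' i, f⟫ • F i) →
      |LinearMap.trace ℝ H (K : H →ₗ[ℝ] H)| / N ≤ ⨆ i, |⟪G' i, F i⟫|) ∧
    (∀ G' : Fin N → H, (∀ f : H, K f = ∑ i, ⟪G' i, f⟫ • F i) →
      (∀ i, ⟪G' i, F i⟫ = LinearMap.trace ℝ H (K : H →ₗ[ℝ] H) / N) →
      (⨆ p : {p : Fin N × Fin N // p.1 ≠ p.2},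
          eErr (LinearMap.trace ℝ H (K : H →ₗ[ℝ] H) / N)
            (⟪G p.1.1, F p.1.2⟫ * ⟪G p.1.2, F p.1.1⟫)) ≤
      (⨆ p : {p : Fin N × Fin N // p.1 ≠ p.2},
          eErr (LinearMap.trace ℝ H (K : H →ₗ[ℝ] H) / N)
            (⟪G' p.1.1, F p.1.2⟫ * ⟪G' p.1.2, F p.1.1⟫))) := by
  have hG : IsKDual (K : H →ₗ[ℝ] H) F G := hdual
  have : Nontrivial (Fin N) := Fin.nontrivial_iff_two_le.2 hN
  refine ⟨?_, fun G' hG' => ?_, fun G' hG' huni1' => ?_⟩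
  · simp only [huni1, ciSup_const, abs_div, Nat.abs_cast]
  · rw [IsKDual.trace_eq (K := (K : H →ₗ[ℝ] H)) hG']
    exact abs_sum_div_card_le_iSup_abs _
  · have hoff : ∑ p ∈ univ.offDiag, ⟪G' p.1, F p.2⟫ * ⟪G' p.2, F p.1⟫ =
        #(univ : Finset (Fin N)).offDiag * c := by
      rw [IsKDual.sum_offDiag_eq (K := (K : H →ₗ[ℝ] H)) hG' huni1', ← hG.sum_offDiag_eq huni1,
        ← nsmul_eq_mul, ← sum_const]
      exact sum_congr rfl fun p hp => huni2 _ _ (mem_offDiag.1 hp).2.2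
    obtain ⟨a, b, hab⟩ := exists_pair_ne (Fin N)
    obtain ⟨p, hp, hle⟩ := exists_eErr_le_of_sum_eq
      ⟨(a, b), mem_offDiag.2 ⟨mem_univ a, mem_univ b, hab⟩⟩ _ c _ hoff
    have : Nonempty {p : Fin N × Fin N // p.1 ≠ p.2} := ⟨⟨p, (mem_offDiag.1 hp).2.2⟩⟩
    simp only [fun p : {p : Fin N × Fin N // p.1 ≠ p.2} => huni2 _ _ p.2, ciSup_const]
    exact le_ciSup_of_le (Finite.bddAbove_range _) ⟨p, (mem_offDiag.1 hp).2.2⟩ hle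

/-- real Hilbert space, `N ≥ 2`, `K` a bounded operator, `G` a 2-uniform
`K`-dual of `F` (`⟨f_i, g_i⟩ = tr(K)/N` for all `i` and `⟨f_i, g_j⟩⟨f_j, g_i⟩ = c` for all
`i ≠ j`).  Then: (a) every `K`-dual `G'` of `F` satisfies
`max_i |⟨f_i, g'_i⟩| ≥ |tr(K)|/N = max_i |⟨f_i, g_i⟩|`; and (b) every `K`-dual `G'` of `F`
with `⟨f_i, g'_i⟩ = tr(K)/N` for all `i` satisfies
`max_{i≠j} e_{ij}(F,G) ≤ max_{i≠j} e_{ij}(F,G')`. -/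
theorem stmt19
    {H : Type*} [NormedAddCommGroup H] [InnerProductSpace ℝ H] [FiniteDimensional ℝ H]
    (hdim : 1 ≤ Module.finrank ℝ H)
    {N : ℕ} (hN : 2 ≤ N)
    (K : H →L[ℝ] H)
    (F G : Fin N → H)
    (hdual : ∀ f : H, K f = ∑ i, ⟪G i, f⟫ • F i)
    (huni1 : ∀ i, ⟪G i, F i⟫ = LinearMap.trace ℝ H (K : H →ₗ[ℝ] H) / N)
    (c : ℝ)
    (huni2 : ∀ i j, i ≠ j → ⟪G i, F j⟫ * ⟪G j, F i⟫ = c) :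
    ((⨆ i, |⟪G i, F i⟫|) = |LinearMap.trace ℝ H (K : H →ₗ[ℝ] H)| / N) ∧
    (∀ G' : Fin N → H, (∀ f : H, K f = ∑ i, ⟪G' i, f⟫ • F i) →
      |LinearMap.trace ℝ H (K : H →ₗ[ℝ] H)| / N ≤ ⨆ i, |⟪G' i, F i⟫|) ∧
    (∀ G' : Fin N → H, (∀ f : H, K f = ∑ i, ⟪G' i, f⟫ • F i) →
      (∀ i, ⟪G' i, F i⟫ = LinearMap.trace ℝ H (K : H →ₗ[ℝ] H) / N) →
      (⨆ p : {p : Fin N × Fin N // p.1 ≠ p.2},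
          eErr (LinearMap.trace ℝ H (K : H →ₗ[ℝ] H) / N)
            (⟪G p.1.1, F p.1.2⟫ * ⟪G p.1.2, F p.1.1⟫)) ≤
      (⨆ p : {p : Fin N × Fin N // p.1 ≠ p.2},
          eErr (LinearMap.trace ℝ H (K : H →ₗ[ℝ] H) / N)
            (⟪G' p.1.1, F p.1.2⟫ * ⟪G' p.1.2, F p.1.1⟫))) :=
  stmt19_general hN K F G hdual huni1 c huni2
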